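/- For g : Z_3^L → U₃ and the test distribution (y,z) as before: Re E[g(y)·conj(g(z))] ≤ Even(g), where Even(g) = Σ_{|α| ≡ 0 mod 3} |ĝ(α)|². -/

import Mathlib

/-!
Expand `g` in the characters `χ_α(y) = ω^{α·y}`: the correlation becomes
`Σ_{α,β} ĝ(α) conj ĝ(β) E[χ_α(y) conj χ_β(z)]`. The test distribution is a product over the
coordinates, and on a single coordinate `E[ω^{a y - b z}]` vanishes unless `b = -a`, where it is
`ω^{2 a x_i}` times `1` (if `a = 0`) or `-1/2`; averaging over `x` then forces `π₃(α) = 0`. So the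
correlation is `Σ_{π₃ α = 0} ĝ(α) conj ĝ(-α) (-1/2)^{#α}`, and AM–GM together with the symmetry
`α ↦ -α` bounds its real part by `Σ_{π₃ α = 0} |ĝ(α)|² ≤ Even(g)`.
-/

open Finset

noncomputable def ω : ℂ := Complex.exp (2 * Real.pi * Complex.I / 3)

/-- Fourier coefficient of `f : Z_3^ι → ℂ` at `α`: `E_x[f(x) · conj(ω^{α·x})]`. -/
noncomputable def fhat {ι : Type*} [Fintype ι] [DecidableEq ι] (f : (ι → ZMod 3) → ℂ)
    (α : ι → ZMod 3) : ℂ :=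
  (∑ x : ι → ZMod 3, f x * (starRingEnd ℂ) (ω ^ (∑ i, α i * x i).val)) /
    (Fintype.card (ι → ZMod 3) : ℂ)

/-- The projection `π₃(α) ∈ Z_3^K`, whose `i`-th coordinate is the sum of block `i` of `α`. -/
def pi3 {K d : ℕ} (α : Fin K × Fin d → ZMod 3) : Fin K → ZMod 3 :=
  fun i => ∑ j, α (i, j)

/-- `#α`: number of nonzero coordinates of `α`. -/
def nsupp {ι : Type*} [Fintype ι] (α : ι → ZMod 3) : ℕ :=
  (univ.filter (fun i => α i ≠ 0)).card

/-- The test distribution's joint pmf: `x` uniform on `Z_3^K`, and independently per coordinate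
`(i,j)`, `(y_{ij}, z_{ij})` uniform over the six pairs with `y_{ij} + z_{ij} ≠ 2·x_i`,
i.e. the pairs `(a,a+1),(a,a+2),(a+1,a),(a+1,a+1),(a+2,a),(a+2,a+2)` for `a = x_i`. -/
noncomputable def wt {K d : ℕ} (x : Fin K → ZMod 3) (y z : Fin K × Fin d → ZMod 3) : ℝ :=
  (1 / 3 ^ K) * ∏ p : Fin K × Fin d, (if y p + z p = 2 * x p.1 then (0 : ℝ) else 1/6)

/-- `Even(g) = Σ_{|α| ≡ 0} |ĝ(α)|²`. -/
noncomputable def evenPart {ι : Type*} [Fintype ι] [DecidableEq ι]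
    (g : (ι → ZMod 3) → ℂ) : ℝ :=
  ∑ α ∈ univ.filter (fun α : ι → ZMod 3 => (∑ i, α i) = 0), ‖fhat g α‖^2

open Matrix ComplexConjugate
open ZMod (stdAddChar)

lemma AddChar.map_sum_eq_prod {A M ι : Type*} [AddCommMonoid A] [CommMonoid M] (ψ : AddChar A M)
    (s : Finset ι) (f : ι → A) : ψ (∑ i ∈ s, f i) = ∏ i ∈ s, ψ (f i) :=
  map_prod ψ.toMonoidHom (fun i => Multiplicative.ofAdd (f i)) s

lemma omega_pow_val (a : ZMod 3) : ω ^ a.val = stdAddChar a := by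
  rw [ZMod.stdAddChar_apply, ZMod.toCircle_apply, ω, ← Complex.exp_nat_mul]
  push_cast
  ring_nf

theorem sum_sum_prod_eq_prod_sum_sum {ι κ R : Type*} [Fintype ι] [DecidableEq ι]
    [Fintype κ] [CommSemiring R] (F : ι → κ → κ → R) :
    ∑ y : ι → κ, ∑ z : ι → κ, ∏ i, F i (y i) (z i) = ∏ i, ∑ u, ∑ v, F i u v := by
  rw [Fintype.prod_sum fun i u => ∑ v, F i u v]
  exact sum_congr rfl fun y _ => (Fintype.prod_sum fun i v => F i (y i) v).symm

theorem re_sum_mul_conj_neg_le {G : Type*} [InvolutiveNeg G] (S : Finset G)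
    (hS : ∀ α ∈ S, -α ∈ S) (a c : G → ℂ) (hc : ∀ α ∈ S, ‖c α‖ ≤ 1) :
    (∑ α ∈ S, a α * conj (a (-α)) * c α).re ≤ ∑ α ∈ S, ‖a α‖ ^ 2 := by
  have hneg : ∑ α ∈ S, ‖a (-α)‖ ^ 2 = ∑ α ∈ S, ‖a α‖ ^ 2 :=
    sum_nbij' Neg.neg Neg.neg hS hS (fun α _ => neg_neg α) (fun α _ => neg_neg α) fun _ _ => rfl
  calc (∑ α ∈ S, a α * conj (a (-α)) * c α).re ≤ ∑ α ∈ S, ‖a α‖ * ‖a (-α)‖ := by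
        rw [Complex.re_sum]
        refine sum_le_sum fun α hα => (Complex.re_le_norm _).trans ?_
        rw [norm_mul, norm_mul, Complex.norm_conj]
        exact mul_le_of_le_one_right (by positivity) (hc α hα)
    _ ≤ ∑ α ∈ S, (‖a α‖ ^ 2 + ‖a (-α)‖ ^ 2) / 2 :=
        sum_le_sum fun α _ => by nlinarith [sq_nonneg (‖a α‖ - ‖a (-α)‖)]
    _ = ∑ α ∈ S, ‖a α‖ ^ 2 := by
        rw [← sum_div, sum_add_distrib, hneg]
        ring

section Orthogonality

variable {N : ℕ} [NeZero N] {ι : Type*} [Fintype ι] [DecidableEq ι]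

lemma sum_stdAddChar_mul (a : ZMod N) :
    ∑ u, stdAddChar (a * u) = if a = 0 then (N : ℂ) else 0 := by
  simp_rw [mul_comm a]
  rw [AddChar.sum_mulShift a (ZMod.isPrimitive_stdAddChar N), ZMod.card, Nat.cast_ite,
    Nat.cast_zero]

lemma sum_stdAddChar_dotProduct (c : ι → ZMod N) :
    ∑ α : ι → ZMod N, stdAddChar (α ⬝ᵥ c) = if c = 0 then (N : ℂ) ^ Fintype.card ι else 0 := by
  simp_rw [dotProduct, AddChar.map_sum_eq_prod]
  rw [← Fintype.prod_sum fun i (a : ZMod N) => stdAddChar (a * c i)]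
  simp_rw [mul_comm _ (c _), sum_stdAddChar_mul]
  rw [prod_ite_zero]
  simp [funext_iff]

end Orthogonality

section Fourier

variable {ι : Type*} [Fintype ι] [DecidableEq ι]

lemma fhat_eq (f : (ι → ZMod 3) → ℂ) (α : ι → ZMod 3) :
    fhat f α = (∑ x, f x * conj (stdAddChar (α ⬝ᵥ x))) / 3 ^ Fintype.card ι := by
  simp [fhat, dotProduct, omega_pow_val, ZMod.card]

theorem fhat_inversion (f : (ι → ZMod 3) → ℂ) (y : ι → ZMod 3) :
    ∑ α, fhat f α * stdAddChar (α ⬝ᵥ y) = f y := by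
  have hchar : ∀ α x : ι → ZMod 3,
      conj (stdAddChar (α ⬝ᵥ x)) * stdAddChar (α ⬝ᵥ y) = stdAddChar (α ⬝ᵥ (y - x)) := by
    intro α x
    rw [← AddChar.map_neg_eq_conj, ← AddChar.map_add_eq_mul, dotProduct_sub, neg_add_eq_sub]
  simp_rw [fhat_eq, div_mul_eq_mul_div, sum_mul, ← sum_div, mul_assoc, hchar]
  rw [sum_comm]
  simp_rw [← mul_sum, sum_stdAddChar_dotProduct, sub_eq_zero, mul_ite, mul_zero,
    sum_ite_eq, mem_univ, if_true]
  push_cast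
  field_simp

theorem sum_mul_conj_eq_sum_fhat {Ω : Type*} [Fintype Ω] (w : Ω → ℂ) (Y Z : Ω → ι → ZMod 3)
    (f : (ι → ZMod 3) → ℂ) :
    ∑ s, w s * f (Y s) * conj (f (Z s)) =
      ∑ α, ∑ β, fhat f α * conj (fhat f β) *
        ∑ s, w s * stdAddChar (α ⬝ᵥ Y s) * conj (stdAddChar (β ⬝ᵥ Z s)) := by
  simp_rw [← fhat_inversion f, map_sum, map_mul, mul_sum, sum_mul]
  conv_lhs => enter [2, s]; rw [sum_comm]
  rw [sum_comm]
  refine sum_congr rfl fun α _ => ?_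
  rw [sum_comm]
  refine sum_congr rfl fun β _ => sum_congr rfl fun s _ => ?_
  ring

end Fourier

-- The first term comes from all nine pairs `(u, v)`, the second from the three with `u + v = 2c`
-- (a character sum along that line, nonzero only when `a + b = 0`).
noncomputable def pairCoef (a b : ZMod 3) : ℂ :=
  (if a = 0 ∧ b = 0 then 3 / 2 else 0) - if a + b = 0 then 1 / 2 else 0

lemma pairCoef_of_add_ne_zero {a b : ZMod 3} (h : a + b ≠ 0) : pairCoef a b = 0 := by
  have : ¬(a = 0 ∧ b = 0) := fun ⟨ha, hb⟩ => h (by rw [ha, hb, add_zero])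
  simp [pairCoef, h, this]

lemma pairCoef_neg (a : ZMod 3) : pairCoef a (-a) = if a = 0 then 1 else -(1 / 2) := by
  by_cases ha : a = 0 <;> simp [pairCoef, ha]; norm_num

lemma sum_pair_mul_stdAddChar (a b c : ZMod 3) :
    ∑ u, ∑ v, (if u + v = 2 * c then (0 : ℂ) else 1 / 6) *
        (stdAddChar (a * u) * conj (stdAddChar (b * v))) =
      pairCoef a b * stdAddChar ((a - b) * c) := by
  have hsplit : ∀ u v : ZMod 3, (if u + v = 2 * c then (0 : ℂ) else 1 / 6) =
      1 / 6 - if v = 2 * c - u then 1 / 6 else 0 := by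
    intro u v
    simp only [eq_sub_iff_add_eq, add_comm v u]
    split_ifs <;> norm_num
  have hdiag : ∀ u : ZMod 3, stdAddChar (a * u) * conj (stdAddChar (b * (2 * c - u))) =
      stdAddChar ((a + b) * u) * stdAddChar (-(2 * b * c)) := by
    intro u
    rw [← AddChar.map_neg_eq_conj, ← AddChar.map_add_eq_mul, ← AddChar.map_add_eq_mul]
    ring_nf
  calc _ = 1 / 6 * ((∑ u, stdAddChar (a * u)) * ∑ v, stdAddChar (-b * v)) -
        1 / 6 * ((∑ u, stdAddChar ((a + b) * u)) * stdAddChar (-(2 * b * c))) := by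
        simp_rw [hsplit, sub_mul, sum_sub_distrib, ite_mul, zero_mul, sum_ite_eq', mem_univ,
          if_true, hdiag, ← mul_sum, ← sum_mul, sum_mul_sum, ← AddChar.map_neg_eq_conj, neg_mul]
    _ = _ := by
      simp only [sum_stdAddChar_mul, neg_eq_zero, pairCoef]
      by_cases hab : a + b = 0
      · obtain rfl : b = -a := eq_neg_of_add_eq_zero_right hab
        rw [show -(2 * -a * c) = (a - -a) * c by ring]
        by_cases ha : a = 0 <;> simp [ha] <;> ring
      · have hab' : ¬(a = 0 ∧ b = 0) := fun ⟨ha, hb⟩ => hab (by rw [ha, hb, add_zero])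
        rw [not_and_or] at hab'
        rcases hab' with h | h <;> simp [h, hab]

section TestDistribution

variable {K d : ℕ}

lemma pi3_neg (α : Fin K × Fin d → ZMod 3) : pi3 (-α) = -pi3 α := by
  ext i
  simp [pi3]

lemma sum_eq_zero_of_pi3_eq_zero {α : Fin K × Fin d → ZMod 3} (h : pi3 α = 0) :
    ∑ p, α p = 0 := by
  rw [Fintype.sum_prod_type]
  exact sum_eq_zero fun i _ => congrFun h i

noncomputable def testCorr (α β : Fin K × Fin d → ZMod 3) : ℂ :=
  ∑ x : Fin K → ZMod 3, ∑ y : Fin K × Fin d → ZMod 3, ∑ z : Fin K × Fin d → ZMod 3,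
    (wt x y z : ℂ) * stdAddChar (α ⬝ᵥ y) * conj (stdAddChar (β ⬝ᵥ z))

lemma ofReal_wt (x : Fin K → ZMod 3) (y z : Fin K × Fin d → ZMod 3) :
    (wt x y z : ℂ) = 1 / 3 ^ K * ∏ p, if y p + z p = 2 * x p.1 then (0 : ℂ) else 1 / 6 := by
  push_cast [wt, apply_ite (fun r : ℝ => (r : ℂ))]
  norm_num

lemma dotProduct_pi3 (x : Fin K → ZMod 3) (α : Fin K × Fin d → ZMod 3) :
    x ⬝ᵥ pi3 α = ∑ p, α p * x p.1 := by
  simp [dotProduct, pi3, Fintype.sum_prod_type, mul_sum, mul_comm]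

lemma sum_wt_mul_stdAddChar (x : Fin K → ZMod 3) (α β : Fin K × Fin d → ZMod 3) :
    ∑ y, ∑ z, (wt x y z : ℂ) * stdAddChar (α ⬝ᵥ y) * conj (stdAddChar (β ⬝ᵥ z)) =
      1 / 3 ^ K * ((∏ p, pairCoef (α p) (β p)) * stdAddChar (x ⬝ᵥ pi3 (α - β))) := by
  have hterm : ∀ y z : Fin K × Fin d → ZMod 3,
      (wt x y z : ℂ) * stdAddChar (α ⬝ᵥ y) * conj (stdAddChar (β ⬝ᵥ z)) =
        1 / 3 ^ K * ∏ p, (if y p + z p = 2 * x p.1 then (0 : ℂ) else 1 / 6) *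
          (stdAddChar (α p * y p) * conj (stdAddChar (β p * z p))) := by
    intro y z
    simp only [ofReal_wt, dotProduct, AddChar.map_sum_eq_prod, map_prod, prod_mul_distrib]
    ring
  rw [sum_congr rfl fun y _ => sum_congr rfl fun z _ => hterm y z]
  simp_rw [← mul_sum]
  rw [sum_sum_prod_eq_prod_sum_sum fun p u v =>
    (if u + v = 2 * x p.1 then (0 : ℂ) else 1 / 6) *
      (stdAddChar (α p * u) * conj (stdAddChar (β p * v)))]
  simp_rw [sum_pair_mul_stdAddChar, prod_mul_distrib, dotProduct_pi3, AddChar.map_sum_eq_prod,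
    Pi.sub_apply]

lemma testCorr_eq_prod_pairCoef (α β : Fin K × Fin d → ZMod 3) :
    testCorr α β = (∏ p, pairCoef (α p) (β p)) * if pi3 (α - β) = 0 then 1 else 0 := by
  simp_rw [testCorr, sum_wt_mul_stdAddChar, ← mul_sum, sum_stdAddChar_dotProduct,
    Fintype.card_fin]
  split_ifs
  · push_cast
    field_simp
  · simp

lemma prod_pairCoef (α β : Fin K × Fin d → ZMod 3) :
    ∏ p, pairCoef (α p) (β p) = if β = -α then (-(1 / 2)) ^ nsupp α else 0 := by
  split_ifs with h
  · subst h
    simp_rw [Pi.neg_apply, pairCoef_neg, prod_ite, prod_const_one, one_mul, prod_const]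
    rfl
  · obtain ⟨p, hp⟩ : ∃ p, α p + β p ≠ 0 := by
      by_contra! h'
      exact h (funext fun p => eq_neg_of_add_eq_zero_right (h' p))
    exact prod_eq_zero (mem_univ p) (pairCoef_of_add_ne_zero hp)

lemma testCorr_eq (α β : Fin K × Fin d → ZMod 3) :
    testCorr α β = if β = -α ∧ pi3 α = 0 then (-(1 / 2)) ^ nsupp α else 0 := by
  rw [testCorr_eq_prod_pairCoef, prod_pairCoef]
  by_cases h : β = -α
  · subst h
    have hsub : α - -α = -α := by
      have h3 : ∀ a : ZMod 3, a - -a = -a := by decide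
      exact funext fun p => h3 (α p)
    simp [hsub, pi3_neg]
  · simp [h]

lemma sum_wt_mul_conj_eq_sum_testCorr (g : (Fin K × Fin d → ZMod 3) → ℂ) :
    ∑ x : Fin K → ZMod 3, ∑ y, ∑ z, (wt x y z : ℂ) * g y * conj (g z) =
      ∑ α, ∑ β, fhat g α * conj (fhat g β) * testCorr α β := by
  have h := sum_mul_conj_eq_sum_fhat
    (fun s : (Fin K → ZMod 3) × _ × _ => (wt s.1 s.2.1 s.2.2 : ℂ))
    (fun s => s.2.1) (fun s => s.2.2) g
  simp only [Fintype.sum_prod_type] at h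
  exact h

end TestDistribution

theorem stmt14_general (K d : ℕ)
    (g : (Fin K × Fin d → ZMod 3) → ℂ) :
    (∑ x : Fin K → ZMod 3, ∑ y : Fin K × Fin d → ZMod 3, ∑ z : Fin K × Fin d → ZMod 3,
        (wt x y z : ℂ) * g y * (starRingEnd ℂ) (g z)).re
      ≤ evenPart g := by
  set S := univ.filter fun α : Fin K × Fin d → ZMod 3 => pi3 α = 0
  have hexpand : ∑ x : Fin K → ZMod 3, ∑ y, ∑ z, (wt x y z : ℂ) * g y * conj (g z) =
      ∑ α ∈ S, fhat g α * conj (fhat g (-α)) * (-(1 / 2)) ^ nsupp α := by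
    simp_rw [sum_wt_mul_conj_eq_sum_testCorr, testCorr_eq, ite_and, mul_ite, mul_zero,
      sum_ite_eq', mem_univ, if_true, S, sum_filter]
  rw [hexpand]
  calc _ ≤ ∑ α ∈ S, ‖fhat g α‖ ^ 2 :=
        re_sum_mul_conj_neg_le S (fun α hα => by simpa [S, pi3_neg] using hα) _ _
          fun α _ => by
            rw [norm_pow, norm_neg]
            exact pow_le_one₀ (by norm_num) (by norm_num)
    _ ≤ evenPart g :=
        sum_le_sum_of_subset_of_nonneg
          (monotone_filter_right _ fun _ _ => sum_eq_zero_of_pi3_eq_zero) fun _ _ _ => by positivity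

/-- For `U₃`-valued `g` and the test distribution: `Re E[g(y)·conj(g(z))] ≤ Even(g)`. -/
theorem stmt14 (K d : ℕ) (hK : 0 < K) (hd : 1 ≤ d)
    (g : (Fin K × Fin d → ZMod 3) → ℂ) (hgU : ∀ y, g y ∈ ({1, ω, ω^2} : Set ℂ)) :
    (∑ x : Fin K → ZMod 3, ∑ y : Fin K × Fin d → ZMod 3, ∑ z : Fin K × Fin d → ZMod 3,
        (wt x y z : ℂ) * g y * (starRingEnd ℂ) (g z)).re
      ≤ evenPart g :=
  stmt14_general K d g
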